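/- arXiv:1707.08548 — 2 statements merged into one kernel-verified Lean document; each statement's English description precedes it below -/
import Mathlib

section
/- Fix K a positive integer and δ₀, τ₀ > 0. There exists C > 0 such that for every u ∈ C^∞(ℝ; ℂ), every 0 < δ ≤ δ₀, every s ∈ ℝ with |s| < δ, every τ > τ₀, and each choice of sign ±: |(D_s ± iτ(1+s))^K u(s) − (D_s ± iτ)^K u(s)| ≤ C (1 + δτ) · Σ_{k < K} τ^{K−1−k} |D_s^k u(s)|, where D_s = i^{-1} d/ds and the K-th powers denote K-fold compositions of the respective first-order operators. -/
set_option maxHeartbeats 1000000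


noncomputable section

/-- The operator `D_s = i⁻¹ d/ds` on smooth complex functions on `ℝ`. -/
def Ds (u : ℝ → ℂ) : ℝ → ℂ := fun s => Complex.I⁻¹ * deriv u s

/-- The first order operator `v ↦ D_s v + σ·iτ(1+s)v` (with `σ = ±1`). -/
def AOp (τ σ : ℝ) (u : ℝ → ℂ) : ℝ → ℂ :=
  fun s => Ds u s + (σ : ℂ) * Complex.I * (τ : ℂ) * (1 + (s : ℂ)) * u s

/-- The first order operator `v ↦ D_s v + σ·iτ·v` (with `σ = ±1`). -/
def BOp (τ σ : ℝ) (u : ℝ → ℂ) : ℝ → ℂ :=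
  fun s => Ds u s + (σ : ℂ) * Complex.I * (τ : ℂ) * u s

end

open Polynomial Complex Finset
open scoped ContDiff

noncomputable section EEL
namespace EEL

/-! ### Coefficient polynomials -/

def coeP (A : Polynomial ℂ) : ℕ → ℕ → Polynomial ℂ
  | 0, 0 => 1
  | 0, _ + 1 => 0
  | K + 1, 0 => A * coeP A K 0 + Polynomial.C Complex.I⁻¹ * derivative (coeP A K 0)
  | K + 1, k + 1 => coeP A K k + A * coeP A K (k + 1) +
      Polynomial.C Complex.I⁻¹ * derivative (coeP A K (k + 1))

def gam (b : ℂ) : ℕ → ℕ → ℂ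
  | 0, 0 => 1
  | 0, _ + 1 => 0
  | K + 1, 0 => b * gam b K 0
  | K + 1, k + 1 => gam b K k + b * gam b K (k + 1)

lemma coeP_eq_zero (A : Polynomial ℂ) : ∀ K k, K < k → coeP A K k = 0 := by
  intro K
  induction K with
  | zero => intro k hk; match k, hk with | k + 1, _ => rfl
  | succ K ih =>
    intro k hk
    match k, hk with
    | k + 1, hk =>
      show coeP A K k + A * coeP A K (k+1) + Polynomial.C Complex.I⁻¹ * derivative (coeP A K (k+1)) = 0
      rw [ih k (by omega), ih (k+1) (by omega)]
      simp

lemma coeP_diag (A : Polynomial ℂ) : ∀ K, coeP A K K = 1 := by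
  intro K
  induction K with
  | zero => rfl
  | succ K ih =>
    show coeP A K K + A * coeP A K (K+1) + Polynomial.C Complex.I⁻¹ * derivative (coeP A K (K+1)) = 1
    rw [ih, coeP_eq_zero A K (K+1) (by omega)]
    simp

lemma gam_eq_zero (b : ℂ) : ∀ K k, K < k → gam b K k = 0 := by
  intro K
  induction K with
  | zero => intro k hk; match k, hk with | k + 1, _ => rfl
  | succ K ih =>
    intro k hk
    match k, hk with
    | k + 1, hk =>
      show gam b K k + b * gam b K (k+1) = 0
      rw [ih k (by omega), ih (k+1) (by omega)]
      simp

lemma gam_diag (b : ℂ) : ∀ K, gam b K K = 1 := by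
  intro K
  induction K with
  | zero => rfl
  | succ K ih =>
    show gam b K K + b * gam b K (K+1) = 1
    rw [ih, gam_eq_zero b K (K+1) (by omega)]
    simp

lemma coeP_const (b : ℂ) : ∀ K k, coeP (Polynomial.C b) K k = Polynomial.C (gam b K k) := by
  intro K
  induction K with
  | zero => intro k; match k with
    | 0 => simp [coeP, gam]
    | k + 1 => simp [coeP, gam]
  | succ K ih =>
    intro k
    match k with
    | 0 =>
      show Polynomial.C b * coeP _ K 0 + Polynomial.C Complex.I⁻¹ * derivative (coeP _ K 0)
        = Polynomial.C (gam b (K+1) 0)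
      rw [ih, derivative_C]
      show _ = Polynomial.C (b * gam b K 0)
      simp only [derivative_C, mul_zero, add_zero, ← Polynomial.C_mul, ← Polynomial.C_add]
    | k + 1 =>
      show coeP _ K k + Polynomial.C b * coeP _ K (k+1) +
          Polynomial.C Complex.I⁻¹ * derivative (coeP _ K (k+1)) = Polynomial.C (gam b (K+1) (k+1))
      rw [ih, ih, derivative_C]
      show _ = Polynomial.C (gam b K k + b * gam b K (k+1))
      simp only [derivative_C, mul_zero, add_zero, ← Polynomial.C_mul, ← Polynomial.C_add]

lemma sub_gam_eq_zero (A : Polynomial ℂ) (c : ℂ) (K k : ℕ) (h : K ≤ k) :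
    coeP A K k - Polynomial.C (gam c K k) = 0 := by
  rcases eq_or_lt_of_le h with h | h
  · rw [← h, coeP_diag, gam_diag, Polynomial.C_1, sub_self]
  · rw [coeP_eq_zero A K k h, gam_eq_zero c K k h, Polynomial.C_0, sub_self]

/-! ### Iterated derivatives -/

lemma itd_add (n : ℕ) (p q : Polynomial ℂ) :
    derivative^[n] (p + q) = derivative^[n] p + derivative^[n] q := by
  induction n generalizing p q with
  | zero => rfl
  | succ n ih => rw [Function.iterate_succ_apply, Function.iterate_succ_apply,
      Function.iterate_succ_apply, derivative_add, ih]

lemma itd_Cmul (n : ℕ) (a : ℂ) (p : Polynomial ℂ) :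
    derivative^[n] (Polynomial.C a * p) = Polynomial.C a * derivative^[n] p := by
  induction n generalizing p with
  | zero => rfl
  | succ n ih => rw [Function.iterate_succ_apply, Function.iterate_succ_apply,
      derivative_C_mul, ih]

lemma itd_zero (n : ℕ) : derivative^[n] (0 : Polynomial ℂ) = 0 := by
  induction n with
  | zero => rfl
  | succ n ih => rw [Function.iterate_succ_apply, derivative_zero, ih]

lemma itd_C (n : ℕ) (a : ℂ) : derivative^[n+1] (Polynomial.C a : Polynomial ℂ) = 0 := by
  rw [Function.iterate_succ_apply, derivative_C, itd_zero]

lemma itd_one (n : ℕ) : derivative^[n+1] (1 : Polynomial ℂ) = 0 := by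
  rw [← Polynomial.C_1]; exact itd_C n 1

lemma itd_linear_mul (c₀ : ℂ) (A : Polynomial ℂ) (hA : derivative A = Polynomial.C c₀) :
    ∀ (j : ℕ) (p : Polynomial ℂ), derivative^[j+1] (A * p) =
      A * derivative^[j+1] p + ((j : Polynomial ℂ) + 1) * Polynomial.C c₀ * derivative^[j] p := by
  intro j
  induction j with
  | zero =>
    intro p
    rw [Function.iterate_succ_apply, Function.iterate_succ_apply]
    simp only [Function.iterate_zero, id_eq, derivative_mul, hA]
    ring
  | succ j ih =>
    intro p
    have h1 : derivative^[j+2] (A * p) = derivative^[j+1] (derivative (A * p)) := by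
      rw [Function.iterate_succ_apply]
    rw [h1, derivative_mul, hA, itd_add, itd_Cmul, ih (derivative p),
      ← Function.iterate_succ_apply, ← Function.iterate_succ_apply]
    push_cast
    ring

lemma itd_coeP_zero (A : Polynomial ℂ) (K k : ℕ) (h : K ≤ k) (j : ℕ) :
    derivative^[j+1] (coeP A K k) = 0 := by
  rcases eq_or_lt_of_le h with h | h
  · rw [← h, coeP_diag, itd_one]
  · rw [coeP_eq_zero A K k h, itd_zero]

/-! ### gam bound -/

lemma gam_bound (c : ℂ) (τ : ℝ) (hτ : 0 < τ) (hc : ‖c‖ = τ) :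
    ∀ K k, ‖gam c K k‖ ≤ 2 ^ K * τ ^ (K - k) := by
  intro K
  induction K with
  | zero =>
    intro k
    match k with
    | 0 => show ‖(1:ℂ)‖ ≤ _; norm_num
    | k + 1 => show ‖(0:ℂ)‖ ≤ _; norm_num
  | succ K ih =>
    intro k
    match k with
    | 0 =>
      show ‖c * gam c K 0‖ ≤ _
      rw [norm_mul, hc]
      calc τ * ‖gam c K 0‖ ≤ τ * (2 ^ K * τ ^ (K - 0)) := by
            exact mul_le_mul_of_nonneg_left (ih 0) hτ.le
        _ ≤ 2 ^ (K+1) * τ ^ (K + 1 - 0) := by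
            rw [Nat.sub_zero, Nat.sub_zero, pow_succ, pow_succ]
            nlinarith [mul_pos (mul_pos (pow_pos (by norm_num : (0:ℝ) < 2) K) (pow_pos hτ K)) hτ]
    | k + 1 =>
      show ‖gam c K k + c * gam c K (k+1)‖ ≤ _
      have h2 : ‖c * gam c K (k+1)‖ ≤ 2 ^ K * τ ^ (K - k) := by
        by_cases hk : K ≤ k
        · rw [gam_eq_zero c K (k+1) (by omega)]
          simp only [mul_zero, norm_zero]
          positivity
        · rw [norm_mul, hc]
          calc τ * ‖gam c K (k+1)‖ ≤ τ * (2 ^ K * τ ^ (K - (k+1))) :=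
              mul_le_mul_of_nonneg_left (ih (k+1)) hτ.le
            _ = 2 ^ K * τ ^ (K - (k+1) + 1) := by rw [pow_succ]; ring
            _ = 2 ^ K * τ ^ (K - k) := by rw [show K - (k+1) + 1 = K - k by omega]
      calc ‖gam c K k + c * gam c K (k+1)‖ ≤ ‖gam c K k‖ + ‖c * gam c K (k+1)‖ := norm_add_le _ _
        _ ≤ 2 ^ K * τ ^ (K - k) + 2 ^ K * τ ^ (K - k) := add_le_add (ih k) h2
        _ ≤ 2 ^ (K+1) * τ ^ (K + 1 - (k+1)) := by
            rw [show K + 1 - (k+1) = K - k by omega, pow_succ]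
            nlinarith [mul_pos (pow_pos (by norm_num : (0:ℝ) < 2) K) (pow_pos hτ (K - k))]


/-! ### Numeric lemmas -/

lemma num1 (δ₀ τ₀ M : ℝ) (hδ₀ : 0 < δ₀) (hτ₀ : 0 < τ₀) (hM : M = 5 + 2*δ₀ + 2/τ₀) (K : ℕ) :
    M ^ K * (K.factorial : ℝ) + (1+δ₀) * (M ^ K * K.factorial) + 2 ^ K
      + M ^ K * ((K+1).factorial : ℝ) ≤ M ^ (K+1) * ((K+1).factorial : ℝ) := by
  have hτ₀' : (0:ℝ) < 2/τ₀ := by positivity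
  have hMpos : (0:ℝ) < M := by rw [hM]; linarith
  have h2M : (2:ℝ) ≤ M := by rw [hM]; linarith
  have h2K : (2:ℝ) ^ K ≤ M ^ K := pow_le_pow_left₀ (by norm_num) h2M K
  have hMK : (0:ℝ) < M ^ K := pow_pos hMpos K
  have hF1 : (1:ℝ) ≤ K.factorial := by exact_mod_cast Nat.one_le_iff_ne_zero.mpr K.factorial_ne_zero
  have hFs : ((K+1).factorial : ℝ) = ((K:ℝ)+1) * K.factorial := by
    rw [Nat.factorial_succ]; push_cast; ring
  have hFle : (K.factorial : ℝ) ≤ ((K+1).factorial : ℝ) := by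
    rw [hFs]; nlinarith [(Nat.cast_nonneg K : (0:ℝ) ≤ K)]
  have hFpos : (0:ℝ) < ((K+1).factorial : ℝ) := by linarith
  have e1 : M ^ K * (K.factorial : ℝ) ≤ M ^ K * ((K+1).factorial : ℝ) :=
    mul_le_mul_of_nonneg_left hFle hMK.le
  have e2 : (1+δ₀) * (M ^ K * (K.factorial:ℝ)) ≤ (1+δ₀) * (M ^ K * ((K+1).factorial:ℝ)) := by
    apply mul_le_mul_of_nonneg_left _ (by linarith)
    exact mul_le_mul_of_nonneg_left hFle hMK.le
  have e3 : (2:ℝ) ^ K ≤ M ^ K * ((K+1).factorial : ℝ) := by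
    calc (2:ℝ)^K ≤ M^K := h2K
      _ = M^K * 1 := (mul_one _).symm
      _ ≤ M^K * ((K+1).factorial:ℝ) := mul_le_mul_of_nonneg_left (by linarith) hMK.le
  have e4 : (4+δ₀) * (M^K * ((K+1).factorial:ℝ)) ≤ M * (M^K * ((K+1).factorial:ℝ)) := by
    apply mul_le_mul_of_nonneg_right _ (by positivity)
    rw [hM]; linarith
  rw [pow_succ]
  nlinarith [e1, e2, e3, e4]

lemma num2 (δ₀ τ₀ M : ℝ) (hδ₀ : 0 < δ₀) (hτ₀ : 0 < τ₀) (hM : M = 5 + 2*δ₀ + 2/τ₀) (K n : ℕ) :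
    M ^ K * (n.factorial : ℝ) + (1+δ₀) * (M ^ K * n.factorial)
      + (2+δ₀+1/τ₀) * (M ^ K * n.factorial) + (1/τ₀) * (M ^ K * ((n+1).factorial : ℝ))
      ≤ M ^ (K+1) * ((n+1).factorial : ℝ) := by
  have hτ₀' : (0:ℝ) < 1/τ₀ := by positivity
  have hτ₀'' : (0:ℝ) < 2/τ₀ := by positivity
  have hMpos : (0:ℝ) < M := by rw [hM]; linarith
  have hMK : (0:ℝ) < M ^ K := pow_pos hMpos K
  have hF1 : (1:ℝ) ≤ n.factorial := by exact_mod_cast Nat.one_le_iff_ne_zero.mpr n.factorial_ne_zero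
  have hFs : ((n+1).factorial : ℝ) = ((n:ℝ)+1) * n.factorial := by
    rw [Nat.factorial_succ]; push_cast; ring
  have hFle : (n.factorial : ℝ) ≤ ((n+1).factorial : ℝ) := by
    rw [hFs]; nlinarith [(Nat.cast_nonneg n : (0:ℝ) ≤ n)]
  rw [pow_succ]
  have key : (4+2*δ₀+1/τ₀) * (M^K * (n.factorial:ℝ)) + (1/τ₀) * (M^K * ((n+1).factorial:ℝ))
      ≤ M * (M^K * ((n+1).factorial:ℝ)) := by
    have h1 : (4+2*δ₀+1/τ₀) * (M^K * (n.factorial:ℝ)) ≤ (4+2*δ₀+1/τ₀) * (M^K * ((n+1).factorial:ℝ)) := by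
      apply mul_le_mul_of_nonneg_left _ (by linarith)
      exact mul_le_mul_of_nonneg_left hFle hMK.le
    have h2 : (4+2*δ₀+1/τ₀) * (M^K * ((n+1).factorial:ℝ)) + (1/τ₀) * (M^K * ((n+1).factorial:ℝ))
        = (4+2*δ₀+2/τ₀) * (M^K * ((n+1).factorial:ℝ)) := by ring
    have h3 : (4+2*δ₀+2/τ₀) * (M^K * ((n+1).factorial:ℝ)) ≤ M * (M^K * ((n+1).factorial:ℝ)) := by
      apply mul_le_mul_of_nonneg_right _ (by positivity)
      rw [hM]; linarith
    linarith
  nlinarith [key]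

/-! ### Key coefficient estimate -/

lemma key (δ₀ τ₀ δ τ s M : ℝ) (c : ℂ) (A : Polynomial ℂ)
    (hδ₀ : 0 < δ₀) (hτ₀ : 0 < τ₀) (hδ : 0 < δ) (hδδ₀ : δ ≤ δ₀) (hs : |s| < δ)
    (hτ : τ₀ < τ) (hc : ‖c‖ = τ) (hM : M = 5 + 2*δ₀ + 2/τ₀)
    (hA : A = Polynomial.C c * (X + 1)) :
    ∀ K k : ℕ,
      ‖(coeP A K k - Polynomial.C (gam c K k)).eval ((s : ℂ))‖
          ≤ M ^ K * (K.factorial : ℝ) * τ ^ (K - 1 - k) * (1 + δ * τ)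
        ∧ ∀ j : ℕ, ‖(derivative^[j+1] (coeP A K k)).eval ((s : ℂ))‖
          ≤ M ^ K * (((K + j + 1).factorial : ℝ)) * τ ^ (K - k) := by
  have hτpos : 0 < τ := lt_trans hτ₀ hτ
  have hX0 : (0:ℝ) < 1 + δ * τ := by nlinarith
  have hX1 : (1:ℝ) ≤ 1 + δ * τ := by nlinarith
  have hinv : (0:ℝ) < 1/τ₀ := by positivity
  have hinv2 : (0:ℝ) < 2/τ₀ := by positivity
  have hMpos : (0:ℝ) < M := by rw [hM]; linarith
  have h2M : (2:ℝ) ≤ M := by rw [hM]; linarith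
  have hcoefP : (0:ℝ) < 2+δ₀+1/τ₀ := by linarith
  have hcoefP1 : (1:ℝ) ≤ 2+δ₀+1/τ₀ := by linarith
  have hzn : ‖((s:ℝ) : ℂ)‖ = |s| := by simp
  have hAev : A.eval ((s:ℝ):ℂ) = c * (((s:ℝ):ℂ) + 1) := by rw [hA]; simp
  have hAn : ‖A.eval ((s:ℝ):ℂ)‖ ≤ (1+δ₀) * τ := by
    rw [hAev, norm_mul, hc]
    have h1 : ‖(((s:ℝ):ℂ) + 1)‖ ≤ 1 + δ₀ := by
      calc ‖(((s:ℝ):ℂ) + 1)‖ ≤ ‖((s:ℝ):ℂ)‖ + ‖(1:ℂ)‖ := norm_add_le _ _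
        _ = |s| + 1 := by rw [hzn]; simp
        _ ≤ 1 + δ₀ := by linarith [hs]
    calc τ * ‖(((s:ℝ):ℂ) + 1)‖ ≤ τ * (1 + δ₀) := mul_le_mul_of_nonneg_left h1 hτpos.le
      _ = (1+δ₀) * τ := mul_comm _ _
  have hA' : derivative A = Polynomial.C c := by
    rw [hA, derivative_C_mul]; simp
  have hXτ : 1 + δ * τ ≤ (1/τ₀ + δ₀) * τ := by
    have h1 : (1:ℝ) ≤ τ/τ₀ := (one_le_div hτ₀).mpr hτ.le
    have h2 : δ * τ ≤ δ₀ * τ := mul_le_mul_of_nonneg_right hδδ₀ hτpos.le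
    have h3 : τ/τ₀ = (1/τ₀) * τ := by ring
    rw [h3] at h1
    nlinarith
  intro K
  induction K with
  | zero =>
    intro k
    constructor
    · match k with
      | 0 =>
        rw [show coeP A 0 0 = 1 from rfl, show gam c 0 0 = 1 from rfl, Polynomial.C_1, sub_self]
        simp only [eval_zero, norm_zero]
        exact mul_nonneg (mul_nonneg (mul_nonneg (pow_nonneg hMpos.le _) (Nat.cast_nonneg _))
          (pow_nonneg hτpos.le _)) hX0.le
      | k + 1 =>
        rw [show coeP A 0 (k+1) = 0 from rfl, show gam c 0 (k+1) = 0 from rfl, Polynomial.C_0,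
          sub_self]
        simp only [eval_zero, norm_zero]
        exact mul_nonneg (mul_nonneg (mul_nonneg (pow_nonneg hMpos.le _) (Nat.cast_nonneg _))
          (pow_nonneg hτpos.le _)) hX0.le
    · intro j
      match k with
      | 0 =>
        rw [show coeP A 0 0 = 1 from rfl, itd_one]
        simp only [eval_zero, norm_zero]
        exact mul_nonneg (mul_nonneg (pow_nonneg hMpos.le _) (Nat.cast_nonneg _))
          (pow_nonneg hτpos.le _)
      | k + 1 =>
        rw [show coeP A 0 (k+1) = 0 from rfl, itd_zero]
        simp only [eval_zero, norm_zero]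
        exact mul_nonneg (mul_nonneg (pow_nonneg hMpos.le _) (Nat.cast_nonneg _))
          (pow_nonneg hτpos.le _)
  | succ K ih =>
    have hMK : (0:ℝ) < M ^ K := pow_pos hMpos K
    have hMK1 : (1:ℝ) ≤ M ^ K := one_le_pow₀ (by linarith)
    have hfK : (1:ℝ) ≤ (K.factorial : ℝ) := by
      exact_mod_cast Nat.one_le_iff_ne_zero.mpr K.factorial_ne_zero
    -- A·(coefficient difference) bound
    have hE : ∀ k', ‖A.eval ((s:ℝ):ℂ)‖ * ‖(coeP A K k' - Polynomial.C (gam c K k')).eval ((s:ℝ):ℂ)‖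
        ≤ (1+δ₀) * (M ^ K * (K.factorial:ℝ) * τ ^ (K - k') * (1 + δ * τ)) := by
      intro k'
      by_cases hk' : K ≤ k'
      · rw [sub_gam_eq_zero A c K k' hk']
        simp only [eval_zero, norm_zero, mul_zero]
        exact mul_nonneg (by linarith) (mul_nonneg (mul_nonneg (mul_nonneg hMK.le
          (Nat.cast_nonneg _)) (pow_nonneg hτpos.le _)) hX0.le)
      · push_neg at hk'
        have h1 := (ih k').1
        calc ‖A.eval ((s:ℝ):ℂ)‖ * ‖(coeP A K k' - Polynomial.C (gam c K k')).eval ((s:ℝ):ℂ)‖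
            ≤ ((1+δ₀) * τ) * (M ^ K * (K.factorial:ℝ) * τ ^ (K - 1 - k') * (1 + δ * τ)) := by
              apply mul_le_mul hAn h1 (norm_nonneg _)
              exact mul_nonneg (by linarith) hτpos.le
          _ = (1+δ₀) * (M ^ K * (K.factorial:ℝ) * (τ ^ (K - 1 - k') * τ) * (1 + δ * τ)) := by ring
          _ = (1+δ₀) * (M ^ K * (K.factorial:ℝ) * τ ^ (K - k') * (1 + δ * τ)) := by
              rw [← pow_succ, show K - 1 - k' + 1 = K - k' from by omega]
    -- τ · coefficient bound
    have hP : ∀ k', τ * ‖(coeP A K k').eval ((s:ℝ):ℂ)‖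
        ≤ (2+δ₀+1/τ₀) * (M ^ K * (K.factorial:ℝ) * τ ^ (K - k' + 1)) := by
      intro k'
      have hpow : (0:ℝ) < τ ^ (K - k' + 1) := pow_pos hτpos _
      have hY : (0:ℝ) ≤ M ^ K * (K.factorial:ℝ) * τ ^ (K - k' + 1) :=
        mul_nonneg (mul_nonneg hMK.le (Nat.cast_nonneg _)) hpow.le
      by_cases hk1 : K < k'
      · rw [coeP_eq_zero A K k' hk1]
        simp only [eval_zero, norm_zero, mul_zero]
        exact mul_nonneg hcoefP.le hY
      · by_cases hk2 : k' = K
        · rw [hk2, coeP_diag]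
          simp only [eval_one, norm_one, mul_one, Nat.sub_self, zero_add, pow_one]
          have h1 : (1:ℝ) ≤ M ^ K * (K.factorial:ℝ) := by nlinarith
          calc τ = 1 * τ := (one_mul τ).symm
            _ ≤ (M ^ K * (K.factorial:ℝ)) * τ :=
                mul_le_mul_of_nonneg_right h1 hτpos.le
            _ ≤ (2+δ₀+1/τ₀) * (M ^ K * (K.factorial:ℝ) * τ) := by
                rw [← mul_assoc]
                exact mul_le_mul_of_nonneg_right (le_mul_of_one_le_left
                  (by nlinarith) hcoefP1) hτpos.le
        · have hk' : k' < K := by omega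
          have hsplit : ‖(coeP A K k').eval ((s:ℝ):ℂ)‖
              ≤ ‖(coeP A K k' - Polynomial.C (gam c K k')).eval ((s:ℝ):ℂ)‖ + ‖gam c K k'‖ := by
            have heq : (coeP A K k').eval ((s:ℝ):ℂ)
                = (coeP A K k' - Polynomial.C (gam c K k')).eval ((s:ℝ):ℂ) + gam c K k' := by
              simp only [eval_sub, eval_C]; ring
            rw [heq]; exact norm_add_le _ _
          have h1 := (ih k').1
          have h2 := gam_bound c τ hτpos hc K k'
          have hb : τ * ‖(coeP A K k').eval ((s:ℝ):ℂ)‖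
              ≤ τ * (M ^ K * (K.factorial:ℝ) * τ ^ (K - 1 - k') * (1 + δ * τ))
                + τ * (2 ^ K * τ ^ (K - k')) := by
            calc τ * ‖(coeP A K k').eval ((s:ℝ):ℂ)‖
                ≤ τ * (‖(coeP A K k' - Polynomial.C (gam c K k')).eval ((s:ℝ):ℂ)‖ + ‖gam c K k'‖) :=
                  mul_le_mul_of_nonneg_left hsplit hτpos.le
              _ = τ * ‖(coeP A K k' - Polynomial.C (gam c K k')).eval ((s:ℝ):ℂ)‖
                  + τ * ‖gam c K k'‖ := by ring
              _ ≤ τ * (M ^ K * (K.factorial:ℝ) * τ ^ (K - 1 - k') * (1 + δ * τ))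
                  + τ * (2 ^ K * τ ^ (K - k')) :=
                  add_le_add (mul_le_mul_of_nonneg_left h1 hτpos.le)
                    (mul_le_mul_of_nonneg_left h2 hτpos.le)
          have hb1 : τ * (M ^ K * (K.factorial:ℝ) * τ ^ (K - 1 - k') * (1 + δ * τ))
              ≤ (1/τ₀ + δ₀) * (M ^ K * (K.factorial:ℝ) * τ ^ (K - k' + 1)) := by
            have hee : τ ^ (K - 1 - k') * τ * τ = τ ^ (K - k' + 1) := by
              rw [← pow_succ, ← pow_succ, show K - 1 - k' + 1 + 1 = K - k' + 1 from by omega]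
            calc τ * (M ^ K * (K.factorial:ℝ) * τ ^ (K - 1 - k') * (1 + δ * τ))
                ≤ τ * (M ^ K * (K.factorial:ℝ) * τ ^ (K - 1 - k') * ((1/τ₀ + δ₀) * τ)) := by
                  apply mul_le_mul_of_nonneg_left _ hτpos.le
                  apply mul_le_mul_of_nonneg_left hXτ
                  exact mul_nonneg (mul_nonneg hMK.le (Nat.cast_nonneg _)) (pow_nonneg hτpos.le _)
              _ = (1/τ₀ + δ₀) * (M ^ K * (K.factorial:ℝ) * (τ ^ (K - 1 - k') * τ * τ)) := by ring
              _ = (1/τ₀ + δ₀) * (M ^ K * (K.factorial:ℝ) * τ ^ (K - k' + 1)) := by rw [hee]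
          have hb2 : τ * (2 ^ K * τ ^ (K - k'))
              ≤ 1 * (M ^ K * (K.factorial:ℝ) * τ ^ (K - k' + 1)) := by
            have h2K : (2:ℝ) ^ K ≤ M ^ K := pow_le_pow_left₀ (by norm_num) h2M K
            have hee : τ * τ ^ (K - k') = τ ^ (K - k' + 1) := (pow_succ' τ _).symm
            rw [one_mul]
            calc τ * (2 ^ K * τ ^ (K - k')) = 2 ^ K * (τ * τ ^ (K - k')) := by ring
              _ = 2 ^ K * τ ^ (K - k' + 1) := by rw [hee]
              _ ≤ (M ^ K * (K.factorial:ℝ)) * τ ^ (K - k' + 1) := by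
                  apply mul_le_mul_of_nonneg_right _ hpow.le
                  nlinarith
              _ = M ^ K * (K.factorial:ℝ) * τ ^ (K - k' + 1) := by ring
          have hfin : ((1/τ₀ + δ₀) + 1) * (M ^ K * (K.factorial:ℝ) * τ ^ (K - k' + 1))
              ≤ (2+δ₀+1/τ₀) * (M ^ K * (K.factorial:ℝ) * τ ^ (K - k' + 1)) :=
            mul_le_mul_of_nonneg_right (by linarith) hY
          linarith [hb, hb1, hb2, hfin]
    -- (j+1) · τ · iterated-derivative bound
    have hjP : ∀ (k' j' : ℕ), ((j':ℝ)+1) * (τ * ‖(derivative^[j'] (coeP A K k')).eval ((s:ℝ):ℂ)‖)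
        ≤ (2+δ₀+1/τ₀) * (M ^ K * (((K+j'+1).factorial:ℝ)) * τ ^ (K - k' + 1)) := by
      intro k' j'
      match j' with
      | 0 =>
        simp only [Nat.cast_zero, zero_add, one_mul, Function.iterate_zero, id_eq]
        calc τ * ‖(coeP A K k').eval ((s:ℝ):ℂ)‖
            ≤ (2+δ₀+1/τ₀) * (M ^ K * (K.factorial:ℝ) * τ ^ (K - k' + 1)) := hP k'
          _ ≤ (2+δ₀+1/τ₀) * (M ^ K * (((K+0+1).factorial:ℝ)) * τ ^ (K - k' + 1)) := by
              have hle : (K.factorial:ℝ) ≤ ((K+0+1).factorial:ℝ) := by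
                exact_mod_cast Nat.factorial_le (by omega)
              apply mul_le_mul_of_nonneg_left _ hcoefP.le
              apply mul_le_mul_of_nonneg_right _ (pow_nonneg hτpos.le _)
              exact mul_le_mul_of_nonneg_left hle hMK.le
      | j'' + 1 =>
        have h := (ih k').2 j''
        have hfjnn : (0:ℝ) ≤ ((K + j'' + 1).factorial : ℝ) := Nat.cast_nonneg _
        have hYe : (0:ℝ) ≤ M ^ K * ((K + j'' + 1).factorial : ℝ) * τ ^ (K - k' + 1) :=
          mul_nonneg (mul_nonneg hMK.le hfjnn) (pow_nonneg hτpos.le _)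
        have hee : τ * τ ^ (K - k') = τ ^ (K - k' + 1) := (pow_succ' τ _).symm
        have h2 : ((j'':ℝ)+2) ≤ ((K:ℝ)+(j'':ℝ)+2) := by
          linarith [(Nat.cast_nonneg K : (0:ℝ) ≤ (K:ℝ))]
        have hfc : ((K + (j''+1) + 1).factorial : ℝ)
            = ((K:ℝ)+(j'':ℝ)+2) * ((K+j''+1).factorial : ℝ) := by
          rw [show K + (j''+1) + 1 = (K + j'' + 1) + 1 from by omega, Nat.factorial_succ]
          push_cast; ring
        have hstep : τ * ‖(derivative^[j''+1] (coeP A K k')).eval ((s:ℝ):ℂ)‖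
            ≤ M ^ K * ((K+j''+1).factorial:ℝ) * τ ^ (K - k' + 1) := by
          calc τ * ‖(derivative^[j''+1] (coeP A K k')).eval ((s:ℝ):ℂ)‖
              ≤ τ * (M ^ K * ((K+j''+1).factorial:ℝ) * τ ^ (K - k')) :=
                mul_le_mul_of_nonneg_left h hτpos.le
            _ = M ^ K * ((K+j''+1).factorial:ℝ) * (τ * τ ^ (K - k')) := by ring
            _ = M ^ K * ((K+j''+1).factorial:ℝ) * τ ^ (K - k' + 1) := by rw [hee]
        calc ((↑(j''+1):ℝ)+1) * (τ * ‖(derivative^[j''+1] (coeP A K k')).eval ((s:ℝ):ℂ)‖)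
            = ((j'':ℝ)+2) * (τ * ‖(derivative^[j''+1] (coeP A K k')).eval ((s:ℝ):ℂ)‖) := by
              push_cast; ring
          _ ≤ ((j'':ℝ)+2) * (M ^ K * ((K+j''+1).factorial:ℝ) * τ ^ (K - k' + 1)) := by
              apply mul_le_mul_of_nonneg_left hstep
              linarith [(Nat.cast_nonneg j'' : (0:ℝ) ≤ (j'':ℝ))]
          _ ≤ ((K:ℝ)+(j'':ℝ)+2) * (M ^ K * ((K+j''+1).factorial:ℝ) * τ ^ (K - k' + 1)) :=
              mul_le_mul_of_nonneg_right h2 hYe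
          _ ≤ (2+δ₀+1/τ₀) * (((K:ℝ)+(j'':ℝ)+2) * (M ^ K * ((K+j''+1).factorial:ℝ)
                * τ ^ (K - k' + 1))) := by
              apply le_mul_of_one_le_left _ hcoefP1
              apply mul_nonneg _ hYe
              linarith [(Nat.cast_nonneg K : (0:ℝ) ≤ (K:ℝ)), (Nat.cast_nonneg j'' : (0:ℝ) ≤ (j'':ℝ))]
          _ = (2+δ₀+1/τ₀) * (M ^ K * (((K:ℝ)+(j'':ℝ)+2) * ((K+j''+1).factorial:ℝ))
                * τ ^ (K - k' + 1)) := by ring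
          _ = (2+δ₀+1/τ₀) * (M ^ K * (((K+(j''+1)+1).factorial:ℝ)) * τ ^ (K - k' + 1)) := by
              rw [hfc]
    intro k
    by_cases hbig : K + 1 ≤ k
    · constructor
      · rw [sub_gam_eq_zero A c (K+1) k hbig]
        simp only [eval_zero, norm_zero]
        exact mul_nonneg (mul_nonneg (mul_nonneg (pow_nonneg hMpos.le _) (Nat.cast_nonneg _))
          (pow_nonneg hτpos.le _)) hX0.le
      · intro j
        rw [itd_coeP_zero A (K+1) k hbig j]
        simp only [eval_zero, norm_zero]
        exact mul_nonneg (mul_nonneg (pow_nonneg hMpos.le _) (Nat.cast_nonneg _))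
          (pow_nonneg hτpos.le _)
    · push_neg at hbig
      have hkK : k ≤ K := by omega
      have hIinv : ‖(Complex.I⁻¹ : ℂ)‖ = 1 := by simp
      have hpw : τ ^ (K - k) ≤ (1/τ₀) * τ ^ (K - k + 1) := by
        have h1 : (1:ℝ) ≤ τ/τ₀ := (one_le_div hτ₀).mpr hτ.le
        have h2 : τ ^ (K - k) * 1 ≤ τ ^ (K - k) * (τ/τ₀) :=
          mul_le_mul_of_nonneg_left h1 (pow_nonneg hτpos.le _)
        have h3 : (1/τ₀) * τ ^ (K - k + 1) = τ ^ (K - k) * (τ/τ₀) := by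
          rw [pow_succ]; ring
        rw [h3]; linarith
      cases k with
      | zero =>
        constructor
        · -- (i), k = 0
          rw [show K + 1 - 1 - 0 = K - 0 from by omega]
          have hexp0 : (coeP A (K+1) 0 - Polynomial.C (gam c (K+1) 0)).eval ((s:ℝ):ℂ)
              = (A.eval ((s:ℝ):ℂ) * (coeP A K 0 - Polynomial.C (gam c K 0)).eval ((s:ℝ):ℂ)
                  + (c * ((s:ℝ):ℂ)) * gam c K 0)
                + Complex.I⁻¹ * (derivative (coeP A K 0)).eval ((s:ℝ):ℂ) := by
            show (A * coeP A K 0 + Polynomial.C Complex.I⁻¹ * derivative (coeP A K 0)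
                - Polynomial.C (c * gam c K 0)).eval ((s:ℝ):ℂ) = _
            simp only [eval_sub, eval_add, eval_mul, eval_C]
            rw [hAev]; ring
          have tri : ‖(coeP A (K+1) 0 - Polynomial.C (gam c (K+1) 0)).eval ((s:ℝ):ℂ)‖
              ≤ ‖A.eval ((s:ℝ):ℂ) * (coeP A K 0 - Polynomial.C (gam c K 0)).eval ((s:ℝ):ℂ)‖
                + ‖(c * ((s:ℝ):ℂ)) * gam c K 0‖
                + ‖Complex.I⁻¹ * (derivative (coeP A K 0)).eval ((s:ℝ):ℂ)‖ := by
            rw [hexp0]; exact norm_add₃_le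
          have hbA : ‖A.eval ((s:ℝ):ℂ) * (coeP A K 0 - Polynomial.C (gam c K 0)).eval ((s:ℝ):ℂ)‖
              ≤ (1+δ₀) * (M ^ K * (K.factorial:ℝ) * τ ^ (K - 0) * (1 + δ * τ)) := by
            rw [norm_mul]; exact hE 0
          have hbG : ‖(c * ((s:ℝ):ℂ)) * gam c K 0‖ ≤ 2 ^ K * (τ ^ (K - 0) * (1 + δ * τ)) := by
            rw [norm_mul, norm_mul, hc, hzn]
            have hg := gam_bound c τ hτpos hc K 0
            calc τ * |s| * ‖gam c K 0‖ ≤ (τ * δ) * (2 ^ K * τ ^ (K - 0)) := by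
                  apply mul_le_mul (mul_le_mul_of_nonneg_left hs.le hτpos.le) hg
                    (norm_nonneg _) (mul_nonneg hτpos.le hδ.le)
              _ = 2 ^ K * (τ ^ (K - 0) * (δ * τ)) := by ring
              _ ≤ 2 ^ K * (τ ^ (K - 0) * (1 + δ * τ)) := by
                  apply mul_le_mul_of_nonneg_left _ (by positivity)
                  exact mul_le_mul_of_nonneg_left (by linarith) (pow_nonneg hτpos.le _)
          have hbD : ‖Complex.I⁻¹ * (derivative (coeP A K 0)).eval ((s:ℝ):ℂ)‖
              ≤ M ^ K * (((K+1).factorial:ℝ)) * τ ^ (K - 0) := by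
            rw [norm_mul, hIinv, one_mul]
            have hD := (ih 0).2 0
            simp only [zero_add, Function.iterate_one, Nat.add_zero] at hD
            exact hD
          have hbD2 : M ^ K * (((K+1).factorial:ℝ)) * τ ^ (K - 0)
              ≤ M ^ K * (((K+1).factorial:ℝ)) * (τ ^ (K - 0) * (1 + δ * τ)) := by
            rw [← mul_assoc]
            exact le_mul_of_one_le_right (mul_nonneg (mul_nonneg hMK.le (Nat.cast_nonneg _))
              (pow_nonneg hτpos.le _)) hX1
          have hXe : (0:ℝ) ≤ τ ^ (K - 0) * (1 + δ * τ) :=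
            mul_nonneg (pow_nonneg hτpos.le _) hX0.le
          have hmul := mul_le_mul_of_nonneg_right (num1 δ₀ τ₀ M hδ₀ hτ₀ hM K) hXe
          have hpad : (0:ℝ) ≤ M ^ K * (K.factorial:ℝ) * (τ ^ (K - 0) * (1 + δ * τ)) :=
            mul_nonneg (mul_nonneg hMK.le (Nat.cast_nonneg _)) hXe
          linarith [tri, hbA, hbG, hbD, hbD2, hmul, hpad]
        · -- (ii), k = 0
          intro j
          rw [show K + 1 - 0 = K - 0 + 1 from by omega, show K + 1 + j + 1 = K + j + 2 from by omega]
          have e1 : derivative^[j+1] (coeP A (K+1) 0)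
              = (A * derivative^[j+1] (coeP A K 0)
                  + ((j : Polynomial ℂ)+1) * Polynomial.C c * derivative^[j] (coeP A K 0))
                + Polynomial.C Complex.I⁻¹ * derivative^[j+2] (coeP A K 0) := by
            show derivative^[j+1] (A * coeP A K 0
                + Polynomial.C Complex.I⁻¹ * derivative (coeP A K 0)) = _
            rw [itd_add, itd_Cmul, itd_linear_mul c A hA' j, ← Function.iterate_succ_apply]
          have hexp0d : (derivative^[j+1] (coeP A (K+1) 0)).eval ((s:ℝ):ℂ)
              = (A.eval ((s:ℝ):ℂ) * (derivative^[j+1] (coeP A K 0)).eval ((s:ℝ):ℂ)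
                  + (((j:ℂ))+1) * c * (derivative^[j] (coeP A K 0)).eval ((s:ℝ):ℂ))
                + Complex.I⁻¹ * (derivative^[j+2] (coeP A K 0)).eval ((s:ℝ):ℂ) := by
            rw [e1]
            simp only [eval_add, eval_mul, eval_C, eval_natCast, eval_one]
            try ring
          have tri : ‖(derivative^[j+1] (coeP A (K+1) 0)).eval ((s:ℝ):ℂ)‖
              ≤ ‖A.eval ((s:ℝ):ℂ) * (derivative^[j+1] (coeP A K 0)).eval ((s:ℝ):ℂ)‖
                + ‖(((j:ℂ))+1) * c * (derivative^[j] (coeP A K 0)).eval ((s:ℝ):ℂ)‖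
                + ‖Complex.I⁻¹ * (derivative^[j+2] (coeP A K 0)).eval ((s:ℝ):ℂ)‖ := by
            rw [hexp0d]
            exact le_trans (norm_add_le _ _) (add_le_add_left (norm_add_le _ _) _)
          have tA : ‖A.eval ((s:ℝ):ℂ) * (derivative^[j+1] (coeP A K 0)).eval ((s:ℝ):ℂ)‖
              ≤ (1+δ₀) * (M ^ K * (((K+j+1).factorial:ℝ)) * τ ^ (K - 0 + 1)) := by
            rw [norm_mul]
            calc ‖A.eval ((s:ℝ):ℂ)‖ * ‖(derivative^[j+1] (coeP A K 0)).eval ((s:ℝ):ℂ)‖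
                ≤ ((1+δ₀) * τ) * (M ^ K * (((K+j+1).factorial:ℝ)) * τ ^ (K - 0)) :=
                  mul_le_mul hAn ((ih 0).2 j) (norm_nonneg _) (mul_nonneg (by linarith) hτpos.le)
              _ = (1+δ₀) * (M ^ K * (((K+j+1).factorial:ℝ)) * (τ ^ (K - 0) * τ)) := by ring
              _ = (1+δ₀) * (M ^ K * (((K+j+1).factorial:ℝ)) * τ ^ (K - 0 + 1)) := by
                  rw [← pow_succ]
          have hnj : ‖(((j:ℂ))+1)‖ = (j:ℝ)+1 := by
            rw [show ((j:ℂ)+1) = (((j+1:ℕ)):ℂ) from by push_cast; ring, Complex.norm_natCast]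
            push_cast; ring
          have tB : ‖(((j:ℂ))+1) * c * (derivative^[j] (coeP A K 0)).eval ((s:ℝ):ℂ)‖
              ≤ (2+δ₀+1/τ₀) * (M ^ K * (((K+j+1).factorial:ℝ)) * τ ^ (K - 0 + 1)) := by
            rw [norm_mul, norm_mul, hnj, hc]
            calc ((j:ℝ)+1) * τ * ‖(derivative^[j] (coeP A K 0)).eval ((s:ℝ):ℂ)‖
                = ((j:ℝ)+1) * (τ * ‖(derivative^[j] (coeP A K 0)).eval ((s:ℝ):ℂ)‖) := by ring
              _ ≤ (2+δ₀+1/τ₀) * (M ^ K * (((K+j+1).factorial:ℝ)) * τ ^ (K - 0 + 1)) := hjP 0 j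
          have tC : ‖Complex.I⁻¹ * (derivative^[j+2] (coeP A K 0)).eval ((s:ℝ):ℂ)‖
              ≤ (1/τ₀) * (M ^ K * (((K+j+2).factorial:ℝ)) * τ ^ (K - 0 + 1)) := by
            rw [norm_mul, hIinv, one_mul]
            have h := (ih 0).2 (j+1)
            rw [show K + (j+1) + 1 = K + j + 2 from by omega] at h
            calc ‖(derivative^[j+1+1] (coeP A K 0)).eval ((s:ℝ):ℂ)‖
                ≤ M ^ K * (((K+j+2).factorial:ℝ)) * τ ^ (K - 0) := h
              _ ≤ M ^ K * (((K+j+2).factorial:ℝ)) * ((1/τ₀) * τ ^ (K - 0 + 1)) := by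
                  apply mul_le_mul_of_nonneg_left _ (mul_nonneg hMK.le (Nat.cast_nonneg _))
                  exact hpw
              _ = (1/τ₀) * (M ^ K * (((K+j+2).factorial:ℝ)) * τ ^ (K - 0 + 1)) := by ring
          have hnum := num2 δ₀ τ₀ M hδ₀ hτ₀ hM K (K+j+1)
          rw [show K + j + 1 + 1 = K + j + 2 from by omega] at hnum
          have hmul := mul_le_mul_of_nonneg_right hnum (pow_nonneg hτpos.le (K - 0 + 1))
          have hpad : (0:ℝ) ≤ M ^ K * (((K+j+1).factorial:ℝ)) * τ ^ (K - 0 + 1) :=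
            mul_nonneg (mul_nonneg hMK.le (Nat.cast_nonneg _)) (pow_nonneg hτpos.le _)
          linarith [tri, tA, tB, tC, hmul, hpad]
      | succ m =>
        have hm : m + 1 ≤ K := hkK
        constructor
        · -- (i), k = m+1
          rw [show K + 1 - 1 - (m+1) = K - (m+1) from by omega]
          have hexp : (coeP A (K+1) (m+1) - Polynomial.C (gam c (K+1) (m+1))).eval ((s:ℝ):ℂ)
              = (coeP A K m - Polynomial.C (gam c K m)).eval ((s:ℝ):ℂ)
                + (A.eval ((s:ℝ):ℂ)
                    * (coeP A K (m+1) - Polynomial.C (gam c K (m+1))).eval ((s:ℝ):ℂ)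
                  + (c * ((s:ℝ):ℂ)) * gam c K (m+1))
                + Complex.I⁻¹ * (derivative (coeP A K (m+1))).eval ((s:ℝ):ℂ) := by
            show (coeP A K m + A * coeP A K (m+1)
                + Polynomial.C Complex.I⁻¹ * derivative (coeP A K (m+1))
                - Polynomial.C (gam c K m + c * gam c K (m+1))).eval ((s:ℝ):ℂ) = _
            simp only [eval_sub, eval_add, eval_mul, eval_C]
            rw [hAev]; ring
          have tri : ‖(coeP A (K+1) (m+1) - Polynomial.C (gam c (K+1) (m+1))).eval ((s:ℝ):ℂ)‖
              ≤ ‖(coeP A K m - Polynomial.C (gam c K m)).eval ((s:ℝ):ℂ)‖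
                + (‖A.eval ((s:ℝ):ℂ)
                    * (coeP A K (m+1) - Polynomial.C (gam c K (m+1))).eval ((s:ℝ):ℂ)‖
                  + ‖(c * ((s:ℝ):ℂ)) * gam c K (m+1)‖)
                + ‖Complex.I⁻¹ * (derivative (coeP A K (m+1))).eval ((s:ℝ):ℂ)‖ := by
            rw [hexp]
            exact le_trans (norm_add_le _ _) (add_le_add_left
              (le_trans (norm_add_le _ _) (add_le_add_right (norm_add_le _ _) _)) _)
          have hb1 := (ih m).1
          rw [show K - 1 - m = K - (m+1) from by omega] at hb1
          have hb2 : ‖A.eval ((s:ℝ):ℂ)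
                * (coeP A K (m+1) - Polynomial.C (gam c K (m+1))).eval ((s:ℝ):ℂ)‖
              ≤ (1+δ₀) * (M ^ K * (K.factorial:ℝ) * τ ^ (K - (m+1)) * (1 + δ * τ)) := by
            rw [norm_mul]; exact hE (m+1)
          have hb3 : ‖(c * ((s:ℝ):ℂ)) * gam c K (m+1)‖
              ≤ 2 ^ K * (τ ^ (K - (m+1)) * (1 + δ * τ)) := by
            rw [norm_mul, norm_mul, hc, hzn]
            have hg := gam_bound c τ hτpos hc K (m+1)
            calc τ * |s| * ‖gam c K (m+1)‖ ≤ (τ * δ) * (2 ^ K * τ ^ (K - (m+1))) := by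
                  apply mul_le_mul (mul_le_mul_of_nonneg_left hs.le hτpos.le) hg
                    (norm_nonneg _) (mul_nonneg hτpos.le hδ.le)
              _ = 2 ^ K * (τ ^ (K - (m+1)) * (δ * τ)) := by ring
              _ ≤ 2 ^ K * (τ ^ (K - (m+1)) * (1 + δ * τ)) := by
                  apply mul_le_mul_of_nonneg_left _ (by positivity)
                  exact mul_le_mul_of_nonneg_left (by linarith) (pow_nonneg hτpos.le _)
          have hb4 : ‖Complex.I⁻¹ * (derivative (coeP A K (m+1))).eval ((s:ℝ):ℂ)‖
              ≤ M ^ K * (((K+1).factorial:ℝ)) * τ ^ (K - (m+1)) := by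
            rw [norm_mul, hIinv, one_mul]
            have hD := (ih (m+1)).2 0
            simp only [zero_add, Function.iterate_one, Nat.add_zero] at hD
            exact hD
          have hb42 : M ^ K * (((K+1).factorial:ℝ)) * τ ^ (K - (m+1))
              ≤ M ^ K * (((K+1).factorial:ℝ)) * (τ ^ (K - (m+1)) * (1 + δ * τ)) := by
            rw [← mul_assoc]
            exact le_mul_of_one_le_right (mul_nonneg (mul_nonneg hMK.le (Nat.cast_nonneg _))
              (pow_nonneg hτpos.le _)) hX1
          have hXe : (0:ℝ) ≤ τ ^ (K - (m+1)) * (1 + δ * τ) :=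
            mul_nonneg (pow_nonneg hτpos.le _) hX0.le
          have hmul := mul_le_mul_of_nonneg_right (num1 δ₀ τ₀ M hδ₀ hτ₀ hM K) hXe
          linarith [tri, hb1, hb2, hb3, hb4, hb42, hmul]
        · -- (ii), k = m+1
          intro j
          rw [show K + 1 - (m+1) = K - (m+1) + 1 from by omega,
            show K + 1 + j + 1 = K + j + 2 from by omega]
          have hpw' : τ ^ (K - (m+1)) * τ = τ ^ (K - (m+1) + 1) := (pow_succ τ _).symm
          have e1 : derivative^[j+1] (coeP A (K+1) (m+1))
              = derivative^[j+1] (coeP A K m)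
                + (A * derivative^[j+1] (coeP A K (m+1))
                  + ((j : Polynomial ℂ)+1) * Polynomial.C c * derivative^[j] (coeP A K (m+1)))
                + Polynomial.C Complex.I⁻¹ * derivative^[j+2] (coeP A K (m+1)) := by
            show derivative^[j+1] (coeP A K m + A * coeP A K (m+1)
                + Polynomial.C Complex.I⁻¹ * derivative (coeP A K (m+1))) = _
            rw [itd_add, itd_add, itd_Cmul, itd_linear_mul c A hA' j,
              ← Function.iterate_succ_apply]
          have hexpd : (derivative^[j+1] (coeP A (K+1) (m+1))).eval ((s:ℝ):ℂ)
              = (derivative^[j+1] (coeP A K m)).eval ((s:ℝ):ℂ)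
                + (A.eval ((s:ℝ):ℂ) * (derivative^[j+1] (coeP A K (m+1))).eval ((s:ℝ):ℂ)
                  + (((j:ℂ))+1) * c * (derivative^[j] (coeP A K (m+1))).eval ((s:ℝ):ℂ))
                + Complex.I⁻¹ * (derivative^[j+2] (coeP A K (m+1))).eval ((s:ℝ):ℂ) := by
            rw [e1]
            simp only [eval_add, eval_mul, eval_C, eval_natCast, eval_one]
            try ring
          have tri : ‖(derivative^[j+1] (coeP A (K+1) (m+1))).eval ((s:ℝ):ℂ)‖
              ≤ ‖(derivative^[j+1] (coeP A K m)).eval ((s:ℝ):ℂ)‖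
                + (‖A.eval ((s:ℝ):ℂ) * (derivative^[j+1] (coeP A K (m+1))).eval ((s:ℝ):ℂ)‖
                  + ‖(((j:ℂ))+1) * c * (derivative^[j] (coeP A K (m+1))).eval ((s:ℝ):ℂ)‖)
                + ‖Complex.I⁻¹ * (derivative^[j+2] (coeP A K (m+1))).eval ((s:ℝ):ℂ)‖ := by
            rw [hexpd]
            exact le_trans (norm_add_le _ _) (add_le_add_left
              (le_trans (norm_add_le _ _) (add_le_add_right (norm_add_le _ _) _)) _)
          have t1 := (ih m).2 j
          rw [show K - m = K - (m+1) + 1 from by omega] at t1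
          have tA : ‖A.eval ((s:ℝ):ℂ) * (derivative^[j+1] (coeP A K (m+1))).eval ((s:ℝ):ℂ)‖
              ≤ (1+δ₀) * (M ^ K * (((K+j+1).factorial:ℝ)) * τ ^ (K - (m+1) + 1)) := by
            rw [norm_mul]
            calc ‖A.eval ((s:ℝ):ℂ)‖ * ‖(derivative^[j+1] (coeP A K (m+1))).eval ((s:ℝ):ℂ)‖
                ≤ ((1+δ₀) * τ) * (M ^ K * (((K+j+1).factorial:ℝ)) * τ ^ (K - (m+1))) :=
                  mul_le_mul hAn ((ih (m+1)).2 j) (norm_nonneg _)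
                    (mul_nonneg (by linarith) hτpos.le)
              _ = (1+δ₀) * (M ^ K * (((K+j+1).factorial:ℝ)) * (τ ^ (K - (m+1)) * τ)) := by ring
              _ = (1+δ₀) * (M ^ K * (((K+j+1).factorial:ℝ)) * τ ^ (K - (m+1) + 1)) := by
                  rw [hpw']
          have hnj : ‖(((j:ℂ))+1)‖ = (j:ℝ)+1 := by
            rw [show ((j:ℂ)+1) = (((j+1:ℕ)):ℂ) from by push_cast; ring, Complex.norm_natCast]
            push_cast; ring
          have tB : ‖(((j:ℂ))+1) * c * (derivative^[j] (coeP A K (m+1))).eval ((s:ℝ):ℂ)‖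
              ≤ (2+δ₀+1/τ₀) * (M ^ K * (((K+j+1).factorial:ℝ)) * τ ^ (K - (m+1) + 1)) := by
            rw [norm_mul, norm_mul, hnj, hc]
            calc ((j:ℝ)+1) * τ * ‖(derivative^[j] (coeP A K (m+1))).eval ((s:ℝ):ℂ)‖
                = ((j:ℝ)+1) * (τ * ‖(derivative^[j] (coeP A K (m+1))).eval ((s:ℝ):ℂ)‖) := by ring
              _ ≤ (2+δ₀+1/τ₀) * (M ^ K * (((K+j+1).factorial:ℝ)) * τ ^ (K - (m+1) + 1)) :=
                  hjP (m+1) j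
          have hpwm : τ ^ (K - (m+1)) ≤ (1/τ₀) * τ ^ (K - (m+1) + 1) := by
            have h1 : (1:ℝ) ≤ τ/τ₀ := (one_le_div hτ₀).mpr hτ.le
            have h2 : τ ^ (K - (m+1)) * 1 ≤ τ ^ (K - (m+1)) * (τ/τ₀) :=
              mul_le_mul_of_nonneg_left h1 (pow_nonneg hτpos.le _)
            have h3 : (1/τ₀) * τ ^ (K - (m+1) + 1) = τ ^ (K - (m+1)) * (τ/τ₀) := by
              rw [pow_succ]; ring
            rw [h3]; linarith
          have tC : ‖Complex.I⁻¹ * (derivative^[j+2] (coeP A K (m+1))).eval ((s:ℝ):ℂ)‖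
              ≤ (1/τ₀) * (M ^ K * (((K+j+2).factorial:ℝ)) * τ ^ (K - (m+1) + 1)) := by
            rw [norm_mul, hIinv, one_mul]
            have h := (ih (m+1)).2 (j+1)
            rw [show K + (j+1) + 1 = K + j + 2 from by omega] at h
            calc ‖(derivative^[j+1+1] (coeP A K (m+1))).eval ((s:ℝ):ℂ)‖
                ≤ M ^ K * (((K+j+2).factorial:ℝ)) * τ ^ (K - (m+1)) := h
              _ ≤ M ^ K * (((K+j+2).factorial:ℝ)) * ((1/τ₀) * τ ^ (K - (m+1) + 1)) := by
                  apply mul_le_mul_of_nonneg_left hpwm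
                    (mul_nonneg hMK.le (Nat.cast_nonneg _))
              _ = (1/τ₀) * (M ^ K * (((K+j+2).factorial:ℝ)) * τ ^ (K - (m+1) + 1)) := by ring
          have hnum := num2 δ₀ τ₀ M hδ₀ hτ₀ hM K (K+j+1)
          rw [show K + j + 1 + 1 = K + j + 2 from by omega] at hnum
          have hmul := mul_le_mul_of_nonneg_right hnum (pow_nonneg hτpos.le (K - (m+1) + 1))
          linarith [tri, t1, tA, tB, tC, hmul]

/-! ### Representation of iterated operators -/

def TOp (A : Polynomial ℂ) (u : ℝ → ℂ) : ℝ → ℂ :=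
  fun s => Ds u s + A.eval (s : ℂ) * u s

lemma contDiff_DsIter {u : ℝ → ℂ} (hu : ContDiff ℝ ∞ u) (k : ℕ) : ContDiff ℝ ∞ (Ds^[k] u) := by
  induction k with
  | zero => exact hu
  | succ k ih =>
    rw [Function.iterate_succ_apply']
    exact contDiff_const.mul (contDiff_infty_iff_deriv.mp ih).2

lemma hasDerivAt_Ds {v : ℝ → ℂ} (hv : ContDiff ℝ ∞ v) (s : ℝ) :
    HasDerivAt v (Complex.I * Ds v s) s := by
  have h := ((hv.differentiable (by simp)) s).hasDerivAt
  have : Complex.I * Ds v s = deriv v s := by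
    simp only [Ds, ← mul_assoc, mul_inv_cancel₀ Complex.I_ne_zero, one_mul]
  rwa [this]

lemma TOp_iterate (A : Polynomial ℂ) {u : ℝ → ℂ} (hu : ContDiff ℝ ∞ u) (K : ℕ) :
    ∀ s : ℝ, (TOp A)^[K] u s
      = ∑ k ∈ Finset.range (K + 1), (coeP A K k).eval (s : ℂ) * Ds^[k] u s := by
  induction K with
  | zero => intro s; simp [coeP]
  | succ K ih =>
    intro s
    have hfun : (TOp A)^[K] u
        = fun t : ℝ => ∑ k ∈ Finset.range (K + 1), (coeP A K k).eval (t : ℂ) * Ds^[k] u t :=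
      funext ih
    rw [Function.iterate_succ_apply', hfun]
    have hD : HasDerivAt
        (fun t : ℝ => ∑ k ∈ Finset.range (K + 1), (coeP A K k).eval (t : ℂ) * Ds^[k] u t)
        (∑ k ∈ Finset.range (K + 1),
          ((derivative (coeP A K k)).eval (s : ℂ) * Ds^[k] u s
            + (coeP A K k).eval (s : ℂ) * (Complex.I * Ds^[k+1] u s))) s := by
      apply HasDerivAt.fun_sum
      intro k _
      have h1 : HasDerivAt (fun t : ℝ => (coeP A K k).eval (t : ℂ))
          ((derivative (coeP A K k)).eval (s : ℂ)) s :=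
        (Polynomial.hasDerivAt (coeP A K k) (s : ℂ)).comp_ofReal
      have h2 : HasDerivAt (Ds^[k] u) (Complex.I * Ds^[k+1] u s) s := by
        have h := hasDerivAt_Ds (contDiff_DsIter hu k) s
        have e : Ds (Ds^[k] u) = Ds^[k+1] u := (Function.iterate_succ_apply' Ds k u).symm
        rwa [e] at h
      exact h1.mul h2
    show Ds _ s + A.eval (s:ℂ) * _ = _
    rw [Ds]
    rw [hD.deriv]
    have hPK1 : coeP A K (K + 1) = 0 := coeP_eq_zero A K (K + 1) (by omega)
    have hRHS : ∑ k ∈ Finset.range (K + 2), (coeP A (K + 1) k).eval (s:ℂ) * Ds^[k] u s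
        = (∑ k ∈ Finset.range (K + 1),
            ((A.eval (s:ℂ) * (coeP A K k).eval (s:ℂ)
              + Complex.I⁻¹ * (derivative (coeP A K k)).eval (s:ℂ)) * Ds^[k] u s
             + (coeP A K k).eval (s:ℂ) * Ds^[k+1] u s)) := by
      rw [Finset.sum_range_succ' (fun k => (coeP A (K + 1) k).eval (s:ℂ) * Ds^[k] u s) (K + 1)]
      have h0 : (coeP A (K + 1) 0).eval (s:ℂ) * Ds^[0] u s
          = (A.eval (s:ℂ) * (coeP A K 0).eval (s:ℂ)
              + Complex.I⁻¹ * (derivative (coeP A K 0)).eval (s:ℂ)) * Ds^[0] u s := by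
        show (A * coeP A K 0 + Polynomial.C Complex.I⁻¹ * derivative (coeP A K 0)).eval (s:ℂ)
            * Ds^[0] u s = _
        simp only [eval_add, eval_mul, eval_C]
      have hsucc : ∀ k, (coeP A (K + 1) (k + 1)).eval (s:ℂ) * Ds^[k+1] u s
          = (A.eval (s:ℂ) * (coeP A K (k+1)).eval (s:ℂ)
              + Complex.I⁻¹ * (derivative (coeP A K (k+1))).eval (s:ℂ)) * Ds^[k+1] u s
            + (coeP A K k).eval (s:ℂ) * Ds^[k+1] u s := by
        intro k
        show (coeP A K k + A * coeP A K (k + 1)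
          + Polynomial.C Complex.I⁻¹ * derivative (coeP A K (k + 1))).eval (s:ℂ) * Ds^[k+1] u s = _
        simp only [eval_add, eval_mul, eval_C]
        ring
      rw [h0, Finset.sum_congr rfl (fun k _ => hsucc k), Finset.sum_add_distrib,
        Finset.sum_add_distrib]
      have hshift : ∑ k ∈ Finset.range (K + 1),
            (A.eval (s:ℂ) * (coeP A K (k+1)).eval (s:ℂ)
              + Complex.I⁻¹ * (derivative (coeP A K (k+1))).eval (s:ℂ)) * Ds^[k+1] u s
            + (A.eval (s:ℂ) * (coeP A K 0).eval (s:ℂ)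
              + Complex.I⁻¹ * (derivative (coeP A K 0)).eval (s:ℂ)) * Ds^[0] u s
          = ∑ k ∈ Finset.range (K + 2),
            (A.eval (s:ℂ) * (coeP A K k).eval (s:ℂ)
              + Complex.I⁻¹ * (derivative (coeP A K k)).eval (s:ℂ)) * Ds^[k] u s :=
        (Finset.sum_range_succ' (fun k =>
          (A.eval (s:ℂ) * (coeP A K k).eval (s:ℂ)
            + Complex.I⁻¹ * (derivative (coeP A K k)).eval (s:ℂ)) * Ds^[k] u s) (K + 1)).symm
      have htop : ∑ k ∈ Finset.range (K + 2),
            (A.eval (s:ℂ) * (coeP A K k).eval (s:ℂ)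
              + Complex.I⁻¹ * (derivative (coeP A K k)).eval (s:ℂ)) * Ds^[k] u s
          = ∑ k ∈ Finset.range (K + 1),
            (A.eval (s:ℂ) * (coeP A K k).eval (s:ℂ)
              + Complex.I⁻¹ * (derivative (coeP A K k)).eval (s:ℂ)) * Ds^[k] u s := by
        rw [Finset.sum_range_succ, hPK1]
        simp
      linear_combination hshift + htop
    rw [hRHS, Finset.mul_sum, Finset.mul_sum, ← Finset.sum_add_distrib]
    apply Finset.sum_congr rfl
    intro k _
    have hI : Complex.I⁻¹ * Complex.I = 1 := inv_mul_cancel₀ Complex.I_ne_zero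
    linear_combination ((coeP A K k).eval (s:ℂ) * Ds^[k+1] u s) * hI

end EEL
end EEL


open Polynomial Complex Finset in
lemma EEL.main (K : ℕ) (hK : 0 < K) (δ₀ τ₀ : ℝ) (hδ₀ : 0 < δ₀) (hτ₀ : 0 < τ₀) :
    ∃ C > (0 : ℝ), ∀ u : ℝ → ℂ, ContDiff ℝ (⊤ : ℕ∞) u →
      ∀ δ : ℝ, 0 < δ → δ ≤ δ₀ → ∀ s : ℝ, |s| < δ → ∀ τ : ℝ, τ₀ < τ →
        ∀ σ : ℝ, σ = 1 ∨ σ = -1 →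
        ‖(AOp τ σ)^[K] u s - (BOp τ σ)^[K] u s‖ ≤
          C * (1 + δ * τ) * ∑ k ∈ Finset.range K, τ ^ (K - 1 - k) * ‖Ds^[k] u s‖ := by
  have hMpos : (0:ℝ) < 5 + 2*δ₀ + 2/τ₀ := by
    have : (0:ℝ) < 2/τ₀ := by positivity
    linarith
  refine ⟨(5 + 2*δ₀ + 2/τ₀) ^ K * (K.factorial : ℝ), ?_, ?_⟩
  · have h1 : (0:ℝ) < (K.factorial : ℝ) := by exact_mod_cast K.factorial_pos
    positivity
  intro u hu δ hδ hδδ₀ s hs τ hτ σ hσ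
  have hu' : ContDiff ℝ (((⊤:ℕ∞) : WithTop ℕ∞)) u := hu.of_le (by simp)
  have hτpos : 0 < τ := lt_trans hτ₀ hτ
  obtain ⟨c, hcdef⟩ : ∃ c : ℂ, c = (σ : ℂ) * Complex.I * (τ : ℂ) := ⟨_, rfl⟩
  have hσn : ‖(σ:ℂ)‖ = 1 := by rcases hσ with h | h <;> rw [h] <;> simp
  have hc : ‖c‖ = τ := by
    rw [hcdef, norm_mul, norm_mul, hσn, Complex.norm_I, one_mul, one_mul]
    rw [Complex.norm_real, Real.norm_eq_abs, abs_of_pos hτpos]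
  have hAop : AOp τ σ = TOp (Polynomial.C c * (X + 1)) := by
    funext v t
    simp only [AOp, TOp, eval_mul, eval_add, eval_C, eval_X, eval_one, hcdef]
    ring
  have hBop : BOp τ σ = TOp (Polynomial.C c) := by
    funext v t
    simp only [BOp, TOp, eval_C, hcdef]
  rw [hAop, hBop, TOp_iterate _ hu' K s, TOp_iterate _ hu' K s, ← Finset.sum_sub_distrib]
  have hterm : ∀ k, (coeP (Polynomial.C c * (X + 1)) K k).eval ((s:ℝ):ℂ) * Ds^[k] u s
      - (coeP (Polynomial.C c) K k).eval ((s:ℝ):ℂ) * Ds^[k] u s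
      = ((coeP (Polynomial.C c * (X + 1)) K k - Polynomial.C (gam c K k)).eval ((s:ℝ):ℂ))
          * Ds^[k] u s := by
    intro k
    rw [coeP_const]
    simp only [eval_sub, eval_C]
    ring
  rw [Finset.sum_congr rfl (fun k _ => hterm k), Finset.sum_range_succ,
    sub_gam_eq_zero _ c K K le_rfl]
  simp only [eval_zero, zero_mul, add_zero]
  have hkey := key δ₀ τ₀ δ τ s (5 + 2*δ₀ + 2/τ₀) c (Polynomial.C c * (X + 1))
    hδ₀ hτ₀ hδ hδδ₀ hs hτ hc rfl rfl K
  have hX0 : (0:ℝ) < 1 + δ * τ := by nlinarith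
  calc ‖∑ k ∈ Finset.range K,
        ((coeP (Polynomial.C c * (X + 1)) K k - Polynomial.C (gam c K k)).eval ((s:ℝ):ℂ))
          * Ds^[k] u s‖
      ≤ ∑ k ∈ Finset.range K,
        ‖((coeP (Polynomial.C c * (X + 1)) K k - Polynomial.C (gam c K k)).eval ((s:ℝ):ℂ))
          * Ds^[k] u s‖ := norm_sum_le _ _
    _ ≤ ∑ k ∈ Finset.range K,
        ((5 + 2*δ₀ + 2/τ₀) ^ K * (K.factorial:ℝ) * (1 + δ * τ))
          * (τ ^ (K - 1 - k) * ‖Ds^[k] u s‖) := by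
        apply Finset.sum_le_sum
        intro k _
        rw [norm_mul]
        calc ‖((coeP (Polynomial.C c * (X + 1)) K k
              - Polynomial.C (gam c K k)).eval ((s:ℝ):ℂ))‖ * ‖Ds^[k] u s‖
            ≤ ((5 + 2*δ₀ + 2/τ₀) ^ K * (K.factorial:ℝ) * τ ^ (K - 1 - k) * (1 + δ * τ))
              * ‖Ds^[k] u s‖ :=
              mul_le_mul_of_nonneg_right (hkey k).1 (norm_nonneg _)
          _ = ((5 + 2*δ₀ + 2/τ₀) ^ K * (K.factorial:ℝ) * (1 + δ * τ))
              * (τ ^ (K - 1 - k) * ‖Ds^[k] u s‖) := by ring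
    _ = (5 + 2*δ₀ + 2/τ₀) ^ K * (K.factorial:ℝ) * (1 + δ * τ)
        * ∑ k ∈ Finset.range K, τ ^ (K - 1 - k) * ‖Ds^[k] u s‖ := by
        rw [← Finset.mul_sum]


/-- Lemma 2.3, estimate (2.4):
`|(D_s ± iτ(1+s))^K u − (D_s ± iτ)^K u| ≤ C(1+δτ) Σ_{k<K} τ^{K−1−k} |D_s^k u|`
for `|s| < δ ≤ δ₀` and `τ > τ₀`. -/
theorem error_estimate_linearized
    (K : ℕ) (hK : 0 < K) (δ₀ τ₀ : ℝ) (hδ₀ : 0 < δ₀) (hτ₀ : 0 < τ₀) :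
    ∃ C > (0 : ℝ), ∀ u : ℝ → ℂ, ContDiff ℝ (⊤ : ℕ∞) u →
      ∀ δ : ℝ, 0 < δ → δ ≤ δ₀ → ∀ s : ℝ, |s| < δ → ∀ τ : ℝ, τ₀ < τ →
        ∀ σ : ℝ, σ = 1 ∨ σ = -1 →
        ‖(AOp τ σ)^[K] u s - (BOp τ σ)^[K] u s‖ ≤
          C * (1 + δ * τ) * ∑ k ∈ Finset.range K, τ ^ (K - 1 - k) * ‖Ds^[k] u s‖ := by
  exact EEL.main K hK δ₀ τ₀ hδ₀ hτ₀
end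

section
/- Let m, n be positive integers and P₂(ζ) = Σ_{j=1}^n ζⱼ², viewed as a polynomial on ℂⁿ. There exists C > 0 such that for all τ ∈ ℝ, η ∈ ℝ and ξ ∈ ℝⁿ: |−iη + P₂^m(ξ − iτeₙ)|² + τ² |(∂ₙ P₂^m)(ξ − iτeₙ)|² + τ^{2m} |(∂ₙ^m P₂^m)(ξ − iτeₙ)|² ≥ C ( |η|² + |ξ − iτeₙ|^{4m} ). -/
noncomputable section

/-- The polynomial `P₂(ζ) = Σⱼ ζⱼ²`. -/
def P₂ (n : ℕ) : MvPolynomial (Fin n) ℂ := ∑ j, MvPolynomial.X j ^ 2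

/-- The last coordinate index of `Fin n`. -/
def lastI (n : ℕ) (hn : 0 < n) : Fin n := ⟨n - 1, Nat.sub_lt hn one_pos⟩

/-- The complex point `ξ − iτeₙ ∈ ℂⁿ`. -/
def evalPt {n : ℕ} (hn : 0 < n) (ξ : Fin n → ℝ) (τ : ℝ) : Fin n → ℂ :=
  fun j => (ξ j : ℂ) - if j = lastI n hn then Complex.I * (τ : ℂ) else 0

end

/-!
Both sides are quasi-homogeneous of degree `4m` under `(τ, η, ξ) ↦ (μτ, μ^{2m}η, μξ)`, so `C` can
be taken to be the minimum of the left side on the compact set `η² + (|ξ|² + τ²)^{2m} = 1`,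
provided the left side has no zero there. For `τ = 0` the left side is `|−iη + |ξ|^{2m}|²`, which vanishes only at
the origin. For `τ ≠ 0` the coordinate `ζₙ = ξₙ − iτ` of `ζ = ξ − iτeₙ` is nonzero, so
`∂ₙP₂^m(ζ) = 2m P₂(ζ)^{m-1} ζₙ = 0` forces `P₂(ζ) = 0`, and then `∂ₙ^m P₂^m(ζ) = 2^m m! ζₙ^m ≠ 0`.
-/

open MvPolynomial

namespace MvPolynomial

variable {R σ : Type*} [CommSemiring R] {φ : MvPolynomial σ R} {d : ℕ}

theorem IsHomogeneous.eval_smul (hφ : φ.IsHomogeneous d) (c : R) (x : σ → R) :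
    eval (c • x) φ = c ^ d * eval x φ := by
  classical
  conv_lhs => rw [φ.as_sum]
  conv_rhs => rw [φ.as_sum]
  simp only [map_sum, eval_monomial, Finset.mul_sum]
  refine Finset.sum_congr rfl fun v hv => ?_
  have hv : v.degree = d := by
    rw [Finsupp.degree_eq_weight_one]; exact hφ (mem_support_iff.mp hv)
  simp only [Finsupp.prod, Pi.smul_apply, smul_eq_mul, mul_pow, Finset.prod_mul_distrib,
    Finset.prod_pow_eq_pow_sum, ← Finsupp.degree_apply, hv]
  ring

theorem IsHomogeneous.iterate_pderiv (hφ : φ.IsHomogeneous d) (i : σ) (k : ℕ) :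
    ((pderiv i)^[k] φ).IsHomogeneous (d - k) := by
  induction k with
  | zero => simpa using hφ
  | succ k ih =>
    rw [Function.iterate_succ_apply', ← Nat.sub_sub]
    exact ih.pderiv

end MvPolynomial

theorem Derivation.exists_iterate_apply_pow {R A : Type*} [CommSemiring R] [CommSemiring A]
    [Algebra R A] (D : Derivation R A A) (a : A) {m k : ℕ} (hk : k ≤ m) :
    ∃ b, D^[k] (a ^ m) = m.descFactorial k * a ^ (m - k) * D a ^ k + a ^ (m - k + 1) * b := by
  induction k with
  | zero => exact ⟨0, by simp⟩
  | succ k ih =>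
    obtain ⟨b, hb⟩ := ih (by omega)
    obtain ⟨j, rfl⟩ : ∃ j, m = k + 1 + j := ⟨m - (k + 1), by omega⟩
    refine ⟨(k + 1 + j).descFactorial k * D (D a ^ k) + (j + 2) * D a * b + a * D b, ?_⟩
    have hj : k + 1 + j - k = j + 1 := by omega
    simp only [Function.iterate_succ_apply', hb, hj, Nat.descFactorial_succ, map_add,
      Derivation.leibniz, Derivation.leibniz_pow, Derivation.map_natCast, smul_eq_mul,
      nsmul_eq_mul, Nat.add_sub_cancel, show k + 1 + j - (k + 1) = j by omega]
    push_cast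
    ring

theorem exists_pos_mul_le_of_homogeneous {X : Type*} [TopologicalSpace X] {Φ Ψ : X → ℝ} {d : ℕ}
    (S : ℝ → X → X) (hd : d ≠ 0) (hK : IsCompact {p | Ψ p = 1})
    (hΦc : ContinuousOn Φ {p | Ψ p = 1}) (hpos : ∀ p, Ψ p = 1 → 0 < Φ p)
    (hΦ : ∀ p, 0 ≤ Φ p) (hΦS : ∀ μ > 0, ∀ p, Φ (S μ p) = μ ^ d * Φ p)
    (hΨS : ∀ μ > 0, ∀ p, Ψ (S μ p) = μ ^ d * Ψ p) :
    ∃ C > 0, ∀ p, C * Ψ p ≤ Φ p := by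
  obtain ⟨C, hC, hCK⟩ := hK.exists_forall_le' hΦc hpos
  refine ⟨C, hC, fun p => ?_⟩
  rcases le_or_gt (Ψ p) 0 with hp | hp
  · exact (mul_nonpos_of_nonneg_of_nonpos hC.le hp).trans (hΦ p)
  set μ := Ψ p ^ (-(d : ℝ)⁻¹)
  have hμ : 0 < μ := Real.rpow_pos_of_pos hp _
  have hμd : μ ^ d * Ψ p = 1 := by
    rw [← Real.rpow_natCast, ← Real.rpow_mul hp.le, neg_mul,
      inv_mul_cancel₀ (Nat.cast_ne_zero.mpr hd), Real.rpow_neg_one, inv_mul_cancel₀ hp.ne']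
  have hCS : C ≤ μ ^ d * Φ p := hΦS μ hμ p ▸ hCK (S μ p) (by simp [hΨS μ hμ, hμd])
  calc C * Ψ p ≤ μ ^ d * Φ p * Ψ p := mul_le_mul_of_nonneg_right hCS hp.le
    _ = Φ p := by rw [mul_right_comm, hμd, one_mul]

noncomputable def symbolNormSq (m n : ℕ) (hn : 0 < n) (τ η : ℝ) (ξ : Fin n → ℝ) : ℝ :=
  ‖-Complex.I * (η : ℂ) + eval (evalPt hn ξ τ) (P₂ n ^ m)‖ ^ 2 +
    τ ^ 2 * ‖eval (evalPt hn ξ τ) (pderiv (lastI n hn) (P₂ n ^ m))‖ ^ 2 +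
    τ ^ (2 * m) * ‖eval (evalPt hn ξ τ) ((pderiv (lastI n hn))^[m] (P₂ n ^ m))‖ ^ 2

def parabolicWeight (m : ℕ) {n : ℕ} (τ η : ℝ) (ξ : Fin n → ℝ) : ℝ :=
  η ^ 2 + ((∑ j, ξ j ^ 2) + τ ^ 2) ^ (2 * m)

section

variable {m n : ℕ} (hn : 0 < n)

theorem isHomogeneous_P₂ : (P₂ n).IsHomogeneous 2 :=
  IsHomogeneous.sum _ _ _ fun j _ => isHomogeneous_X_pow j 2

theorem pderiv_P₂ (i : Fin n) : pderiv i (P₂ n) = 2 * X i := by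
  rw [P₂, map_sum, Finset.sum_eq_single i]
  · simp [Derivation.leibniz_pow, two_mul]
  · intro j _ hj
    simp [Derivation.leibniz_pow, pderiv_X_of_ne hj]
  · simp

theorem evalPt_smul (ξ : Fin n → ℝ) (τ μ : ℝ) :
    evalPt hn (μ • ξ) (μ * τ) = (μ : ℂ) • evalPt hn ξ τ := by
  funext j
  simp only [evalPt, Pi.smul_apply, smul_eq_mul]
  split_ifs <;> push_cast <;> ring

theorem evalPt_lastI (ξ : Fin n → ℝ) (τ : ℝ) :
    evalPt hn ξ τ (lastI n hn) = ξ (lastI n hn) - Complex.I * τ := by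
  simp [evalPt]

theorem eval_evalPt_zero_P₂ (ξ : Fin n → ℝ) :
    eval (evalPt hn ξ 0) (P₂ n) = ((∑ j, ξ j ^ 2 : ℝ) : ℂ) := by
  simp [evalPt, P₂]

theorem continuous_evalPt : Continuous fun p : ℝ × (Fin n → ℝ) => evalPt hn p.2 p.1 := by
  refine continuous_pi fun j => ?_
  simp only [evalPt]
  split_ifs <;> fun_prop

theorem eval_iterate_pderiv_P₂_pow_ne_zero (hm : 0 < m) {z : Fin n → ℂ} {i : Fin n}
    (hz : z i ≠ 0) (h : eval z (pderiv i (P₂ n ^ m)) = 0) :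
    eval z ((pderiv i)^[m] (P₂ n ^ m)) ≠ 0 := by
  have hP : eval z (P₂ n) = 0 := by
    simp only [Derivation.leibniz_pow, pderiv_P₂, smul_eq_mul, nsmul_eq_mul, map_mul, map_natCast,
      map_pow, eval_ofNat, eval_X, mul_eq_zero, Nat.cast_eq_zero, hm.ne', pow_eq_zero_iff', ne_eq,
      OfNat.ofNat_ne_zero, hz, or_self, or_false, false_or] at h
    exact h.1
  obtain ⟨G, hG⟩ := (pderiv i).exists_iterate_apply_pow (P₂ n) (le_refl m)
  simp [hG, pderiv_P₂, hP, hz]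

theorem symbolNormSq_nonneg (τ η : ℝ) (ξ : Fin n → ℝ) : 0 ≤ symbolNormSq m n hn τ η ξ := by
  rw [symbolNormSq, pow_mul]
  positivity

theorem continuous_symbolNormSq :
    Continuous fun p : ℝ × ℝ × (Fin n → ℝ) => symbolNormSq m n hn p.1 p.2.1 p.2.2 := by
  have hz : Continuous fun p : ℝ × ℝ × (Fin n → ℝ) => evalPt hn p.2.2 p.1 :=
    (continuous_evalPt hn).comp (continuous_fst.prodMk (continuous_snd.comp continuous_snd))
  have hev (Q : MvPolynomial (Fin n) ℂ) :
      Continuous fun p : ℝ × ℝ × (Fin n → ℝ) => eval (evalPt hn p.2.2 p.1) Q :=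
    (continuous_eval Q).comp hz
  simp only [symbolNormSq]
  fun_prop

theorem symbolNormSq_smul (hm : 0 < m) {μ : ℝ} (hμ : 0 ≤ μ) (τ η : ℝ) (ξ : Fin n → ℝ) :
    symbolNormSq m n hn (μ * τ) (μ ^ (2 * m) * η) (μ • ξ) =
      μ ^ (4 * m) * symbolNormSq m n hn τ η ξ := by
  have hP : (P₂ n ^ m).IsHomogeneous (2 * m) := isHomogeneous_P₂.pow m
  have hnorm (k : ℕ) (w : ℂ) : ‖(μ : ℂ) ^ k * w‖ = μ ^ k * ‖w‖ := by
    rw [norm_mul, norm_pow, Complex.norm_real, Real.norm_of_nonneg hμ]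
  have hsymb : -Complex.I * ((μ ^ (2 * m) * η : ℝ) : ℂ) + eval ((μ : ℂ) • evalPt hn ξ τ) (P₂ n ^ m)
      = (μ : ℂ) ^ (2 * m) * (-Complex.I * η + eval (evalPt hn ξ τ) (P₂ n ^ m)) := by
    rw [hP.eval_smul]; push_cast; ring
  simp only [symbolNormSq, evalPt_smul, hsymb, hP.pderiv.eval_smul,
    (hP.iterate_pderiv _ m).eval_smul, hnorm]
  obtain ⟨k, rfl⟩ : ∃ k, m = k + 1 := ⟨m - 1, by omega⟩
  rw [show 2 * (k + 1) - 1 = 2 * k + 1 by omega, show 2 * (k + 1) - (k + 1) = k + 1 by omega]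
  ring

theorem parabolicWeight_smul (μ τ η : ℝ) (ξ : Fin n → ℝ) :
    parabolicWeight m (μ * τ) (μ ^ (2 * m) * η) (μ • ξ) =
      μ ^ (4 * m) * parabolicWeight m τ η ξ := by
  simp only [parabolicWeight, Pi.smul_apply, smul_eq_mul, mul_pow, ← Finset.mul_sum]
  rw [← mul_add, mul_pow, ← pow_mul, ← pow_mul]
  ring

theorem eq_zero_of_symbolNormSq_eq_zero (hm : 0 < m) {τ η : ℝ} {ξ : Fin n → ℝ}
    (h : symbolNormSq m n hn τ η ξ = 0) : τ = 0 ∧ η = 0 ∧ ξ = 0 := by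
  rw [symbolNormSq, add_eq_zero_iff_of_nonneg (by positivity) (by rw [pow_mul]; positivity),
    add_eq_zero_iff_of_nonneg (by positivity) (by positivity)] at h
  obtain ⟨⟨hsymb, hderiv⟩, hderivm⟩ := h
  by_cases hτ : τ = 0
  · subst hτ
    have hs : -Complex.I * η + ((∑ j, ξ j ^ 2) ^ m : ℝ) = 0 := by
      simpa [map_pow, eval_evalPt_zero_P₂] using hsymb
    simp only [Complex.ext_iff, Complex.add_re, Complex.add_im, Complex.mul_re, Complex.mul_im,
      Complex.neg_re, Complex.neg_im, Complex.I_re, Complex.I_im, Complex.ofReal_re,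
      Complex.ofReal_im, Complex.zero_re, Complex.zero_im] at hs
    have hsum : ∑ j, ξ j ^ 2 = 0 := eq_zero_of_pow_eq_zero (by linarith [hs.1])
    rw [Finset.sum_eq_zero_iff_of_nonneg fun j _ => sq_nonneg (ξ j)] at hsum
    exact ⟨rfl, by linarith [hs.2],
      funext fun j => (pow_eq_zero_iff two_ne_zero).mp (hsum j (Finset.mem_univ j))⟩
  · have hlast : evalPt hn ξ τ (lastI n hn) ≠ 0 := by
      rw [evalPt_lastI, ne_eq, Complex.ext_iff]
      simp [hτ]
    refine absurd ?_ (eval_iterate_pderiv_P₂_pow_ne_zero hm hlast ?_)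
    · simpa [hτ] using hderivm
    · simpa [hτ] using hderiv

theorem isCompact_parabolicWeight_eq_one (hm : 0 < m) :
    IsCompact {p : ℝ × ℝ × (Fin n → ℝ) | parabolicWeight m p.1 p.2.1 p.2.2 = 1} := by
  refine Metric.isCompact_of_isClosed_isBounded
    (isClosed_eq (by unfold parabolicWeight; fun_prop) continuous_const) ?_
  refine (Metric.isBounded_closedBall (x := 0) (r := 1)).subset ?_
  rintro ⟨τ, η, ξ⟩ hp
  have hp : η ^ 2 + ((∑ j, ξ j ^ 2) + τ ^ 2) ^ (2 * m) = 1 := hp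
  have hsum : 0 ≤ ∑ j, ξ j ^ 2 := by positivity
  have hs : (∑ j, ξ j ^ 2) + τ ^ 2 ≤ 1 := by
    rw [← pow_le_one_iff_of_nonneg (by positivity) (by omega : 2 * m ≠ 0)]
    linarith [sq_nonneg η]
  have hη : η ^ 2 ≤ 1 := by
    linarith [pow_nonneg (by positivity : 0 ≤ (∑ j, ξ j ^ 2) + τ ^ 2) (2 * m)]
  have hξ (j : Fin n) : ξ j ^ 2 ≤ ∑ i, ξ i ^ 2 :=
    Finset.single_le_sum (fun i _ => sq_nonneg (ξ i)) (Finset.mem_univ j)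
  rw [mem_closedBall_zero_iff, norm_prod_le_iff, norm_prod_le_iff,
    pi_norm_le_iff_of_nonneg zero_le_one]
  simp only [Real.norm_eq_abs, ← sq_le_one_iff_abs_le_one]
  exact ⟨by linarith, hη, fun j => by linarith [hξ j, sq_nonneg τ]⟩

end

/-- The symbol estimate (3.8): ellipticity of the conjugated symbol. -/
theorem symbol_lower_bound
    (m n : ℕ) (hm : 0 < m) (hn : 0 < n) :
    ∃ C > (0 : ℝ), ∀ (τ η : ℝ) (ξ : Fin n → ℝ),
      ‖-Complex.I * (η : ℂ) + MvPolynomial.eval (evalPt hn ξ τ) (P₂ n ^ m)‖ ^ 2 +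
        τ ^ 2 * ‖MvPolynomial.eval (evalPt hn ξ τ)
          (MvPolynomial.pderiv (lastI n hn) (P₂ n ^ m))‖ ^ 2 +
        τ ^ (2 * m) * ‖MvPolynomial.eval (evalPt hn ξ τ)
          ((fun Q => MvPolynomial.pderiv (lastI n hn) Q)^[m] (P₂ n ^ m))‖ ^ 2 ≥
      C * (η ^ 2 + ((∑ j, ξ j ^ 2) + τ ^ 2) ^ (2 * m)) := by
  obtain ⟨C, hC, hle⟩ := exists_pos_mul_le_of_homogeneous
    (Φ := fun p : ℝ × ℝ × (Fin n → ℝ) => symbolNormSq m n hn p.1 p.2.1 p.2.2)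
    (Ψ := fun p => parabolicWeight m p.1 p.2.1 p.2.2)
    (fun μ p => (μ * p.1, μ ^ (2 * m) * p.2.1, μ • p.2.2)) (by omega : 4 * m ≠ 0)
    (isCompact_parabolicWeight_eq_one hm) (continuous_symbolNormSq hn).continuousOn
    (fun ⟨τ, η, ξ⟩ hp => (symbolNormSq_nonneg hn ..).lt_of_ne' fun h0 => by
      obtain ⟨rfl, rfl, rfl⟩ := eq_zero_of_symbolNormSq_eq_zero hn hm h0
      simp [parabolicWeight, hm.ne'] at hp)
    (fun p => symbolNormSq_nonneg hn ..)
    (fun μ hμ p => symbolNormSq_smul hn hm hμ.le ..) (fun μ _ p => parabolicWeight_smul ..)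
  exact ⟨C, hC, fun τ η ξ => hle (τ, η, ξ)⟩
end
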